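/- With the notation of the column-row-wise coded exposure setup, for every canonical basis vector e_i of ℂ^N (1 ≤ i ≤ N), every 1 ≤ v ≤ Ny and every 1 ≤ k ≤ K, the spectral norm satisfies ‖Ḟ_v^k(e_i)‖₂ = (Nx·Ny)^{−1/2}·‖R^k‖₂, where R^k = T^{−1/2}·[r_1^k, r_2^k, …, r_{Nx}^k] ∈ ℝ^{T×Nx} is the matrix whose u-th column is T^{−1/2}·(r_u^k(1),…,r_u^k(T))ᵀ. -/

import Mathlib

/-!
Only the `i`-th column of `Ψ` reaches `Ḟ_v^k(e_i)`, and its entries are `N^{-1/2} ω^m` for the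
unimodular root `ω = exp(-2πj·m(i)/N)`. Since `m(t,u,v) = v·Nx·T + u·T + t`, the power
`ω^m(t,u,v)` splits into a constant, a row phase `ω^t` and a column phase `ω^(u·T)`, so
`Ḟ_v^k(e_i) = c · D₁ R^k D₂` with `|c| = (Nx·Ny)^{-1/2}` and unimodular diagonal matrices `D₁`,
`D₂`, which do not change the spectral norm.
-/

open Matrix Finset

namespace HFVcr

/-- The stacked index `m(t,u,v) = (v−1)·Nx·T + (u−1)·T + (t−1)` (with `0`-based
`Fin` indices) identifying the coordinates of `ℂ^N`, `N = T·Nx·Ny`, with triples. -/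
def mIdx {T Nx Ny : ℕ} (p : Fin T × Fin Nx × Fin Ny) : ℕ :=
  p.2.2.val * Nx * T + p.2.1.val * T + p.1.val

/-- The unitary `N`-point DFT matrix, `N = T·Nx·Ny`, with both coordinates of `ℂ^N`
indexed by triples via the stacked index `mIdx`:
`Ψ(m,i) = N^{-1/2}·exp(−j·2π·(i−1)·m/N)`. -/
noncomputable def dft (T Nx Ny : ℕ) :
    Matrix (Fin T × Fin Nx × Fin Ny) (Fin T × Fin Nx × Fin Ny) ℂ :=
  Matrix.of fun p q =>
    (1 / (Real.sqrt ((T : ℝ) * Nx * Ny) : ℂ)) *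
      Complex.exp (-(Complex.I * (2 * (Real.pi : ℂ) * (mIdx q : ℕ) * (mIdx p : ℕ)) /
        ((T : ℂ) * Nx * Ny)))

/-- Squared Euclidean norm `‖f‖₂²` of a vector. -/
noncomputable def euclNormSq {ι : Type*} [Fintype ι] (f : ι → ℂ) : ℝ :=
  ∑ i, ‖f i‖ ^ 2

/-- The submatrix `Ψ_{u,v} ∈ ℂ^{T×N}` of the DFT matrix formed by the rows
`m(t,u,v)`, `1 ≤ t ≤ T`. -/
noncomputable def Psiuv (T Nx Ny : ℕ) (u : Fin Nx) (v : Fin Ny) :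
    Matrix (Fin T) (Fin T × Fin Nx × Fin Ny) ℂ :=
  Matrix.of fun t j => dft T Nx Ny (t, u, v) j

/-- `ḟ_{u,v}^k(x) = R_u^k · Ψ_{u,v} · x ∈ ℂ^T`. -/
noncomputable def fdot {T Nx Ny K : ℕ} (r : Fin Nx → Fin K → Fin T → ℝ)
    (u : Fin Nx) (v : Fin Ny) (k : Fin K) (x : Fin T × Fin Nx × Fin Ny → ℂ) :
    Fin T → ℂ :=
  fun t => (r u k t : ℂ) * (Psiuv T Nx Ny u v *ᵥ x) t

/-- `Ḟ_v^k(x) ∈ ℂ^{T×Nx}`: the matrix whose `u`-th column is `ḟ_{u,v}^k(x)`. -/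
noncomputable def Fvk {T Nx Ny K : ℕ} (r : Fin Nx → Fin K → Fin T → ℝ)
    (v : Fin Ny) (k : Fin K) (x : Fin T × Fin Nx × Fin Ny → ℂ) :
    Matrix (Fin T) (Fin Nx) ℂ :=
  Matrix.of fun t u => fdot r u v k x t

/-- The random row-modulation matrix `R^k = T^{−1/2}·[r_1^k, …, r_{Nx}^k] ∈ ℝ^{T×Nx}`,
whose `u`-th column is `T^{−1/2}·(r_u^k(1),…,r_u^k(T))ᵀ`. -/
noncomputable def RkMat {T Nx K : ℕ} (r : Fin Nx → Fin K → Fin T → ℝ) (k : Fin K) :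
    Matrix (Fin T) (Fin Nx) ℝ :=
  Matrix.of fun t u => (1 / Real.sqrt T) * r u k t

/-- The spectral norm (largest singular value) of a matrix: the operator norm of the
induced linear map between Euclidean spaces. -/
noncomputable def specNorm {m n : Type*} [Fintype m] [Fintype n] [DecidableEq n]
    (A : Matrix m n ℂ) : ℝ :=
  ‖LinearMap.toContinuousLinearMap (Matrix.toEuclideanLin A)‖

open scoped Matrix.Norms.L2Operator

theorem specNorm_eq_l2_opNorm {m n : Type*} [Fintype m] [Fintype n] [DecidableEq n]
    (A : Matrix m n ℂ) : specNorm A = ‖A‖ := rfl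

section UnimodularDiagonal

variable {𝕜 m n : Type*} [RCLike 𝕜] [Fintype m] [Fintype n] [DecidableEq m] [DecidableEq n]
  {d : n → 𝕜}

theorem l2_opNorm_diagonal_le_one (hd : ∀ i, ‖d i‖ = 1) : ‖(diagonal d : Matrix n n 𝕜)‖ ≤ 1 := by
  rw [l2_opNorm_diagonal]
  exact pi_norm_le_iff_of_nonneg zero_le_one |>.mpr fun i => (hd i).le

theorem diagonal_star_mul_diagonal (hd : ∀ i, ‖d i‖ = 1) : diagonal (star d) * diagonal d = 1 := by
  rw [diagonal_mul_diagonal, ← diagonal_one]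
  congr 1
  ext i
  simp [RCLike.conj_mul, hd i]

theorem l2_opNorm_diagonal_mul_le (hd : ∀ i, ‖d i‖ = 1) (B : Matrix n m 𝕜) :
    ‖diagonal d * B‖ ≤ ‖B‖ :=
  (l2_opNorm_mul _ B).trans <| mul_le_of_le_one_left (norm_nonneg B) (l2_opNorm_diagonal_le_one hd)

theorem l2_opNorm_diagonal_mul (hd : ∀ i, ‖d i‖ = 1) (B : Matrix n m 𝕜) :
    ‖diagonal d * B‖ = ‖B‖ := by
  refine le_antisymm (l2_opNorm_diagonal_mul_le hd B) ?_
  calc ‖B‖ = ‖diagonal (star d) * (diagonal d * B)‖ := by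
        rw [← Matrix.mul_assoc, diagonal_star_mul_diagonal hd, Matrix.one_mul]
    _ ≤ ‖diagonal d * B‖ := l2_opNorm_diagonal_mul_le (fun i => by simp [hd i]) _

theorem l2_opNorm_mul_diagonal (hd : ∀ i, ‖d i‖ = 1) (B : Matrix m n 𝕜) :
    ‖B * diagonal d‖ = ‖B‖ := by
  rw [← l2_opNorm_conjTranspose, conjTranspose_mul, diagonal_conjTranspose,
    l2_opNorm_diagonal_mul (fun i => by simp [hd i]), l2_opNorm_conjTranspose]

end UnimodularDiagonal

noncomputable def dftRoot (T Nx Ny : ℕ) (q : Fin T × Fin Nx × Fin Ny) : ℂ :=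
  Complex.exp ((-(2 * Real.pi * mIdx q / ((T : ℝ) * Nx * Ny)) : ℝ) * Complex.I)

theorem norm_dftRoot (T Nx Ny : ℕ) (q : Fin T × Fin Nx × Fin Ny) : ‖dftRoot T Nx Ny q‖ = 1 :=
  Complex.norm_exp_ofReal_mul_I _

theorem dft_apply (T Nx Ny : ℕ) (p q : Fin T × Fin Nx × Fin Ny) :
    dft T Nx Ny p q = (1 / (Real.sqrt ((T : ℝ) * Nx * Ny) : ℂ)) * dftRoot T Nx Ny q ^ mIdx p := by
  rw [dft, of_apply, dftRoot, ← Complex.exp_nat_mul]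
  congr 2
  push_cast
  ring

theorem mIdx_mk {T Nx Ny : ℕ} (t : Fin T) (u : Fin Nx) (v : Fin Ny) :
    mIdx (t, u, v) = v.val * Nx * T + u.val * T + t.val := rfl

theorem Fvk_single_eq {T Nx Ny K : ℕ} (hT : 0 < T) (r : Fin Nx → Fin K → Fin T → ℝ)
    (i : Fin T × Fin Nx × Fin Ny) (v : Fin Ny) (k : Fin K) :
    Fvk r v k (Pi.single i 1) =
      ((1 / Real.sqrt ((Nx : ℝ) * Ny) : ℝ) * dftRoot T Nx Ny i ^ (v.val * Nx * T) : ℂ) •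
        (diagonal (fun t : Fin T => dftRoot T Nx Ny i ^ t.val) *
          (RkMat r k).map Complex.ofReal *
          diagonal (fun u : Fin Nx => dftRoot T Nx Ny i ^ (u.val * T))) := by
  have hscale : 1 / Real.sqrt ((T : ℝ) * Nx * Ny) =
      1 / Real.sqrt ((Nx : ℝ) * Ny) * (1 / Real.sqrt T) := by
    rw [mul_assoc, Real.sqrt_mul (by positivity), mul_comm, one_div_mul_one_div]
  ext t u
  simp only [Fvk, fdot, Psiuv, RkMat, of_apply, mulVec_single, MulOpposite.op_one, one_smul,
    col_apply, dft_apply, mIdx_mk, Matrix.smul_apply, mul_diagonal, diagonal_mul, map_apply,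
    smul_eq_mul, pow_add]
  rw [← Complex.ofReal_one, ← Complex.ofReal_div, hscale]
  push_cast
  ring

theorem specNorm_Fvk_single_general (T Nx Ny K : ℕ) (hT : 0 < T)
    (r : Fin Nx → Fin K → Fin T → ℝ)
    (i : Fin T × Fin Nx × Fin Ny) (v : Fin Ny) (k : Fin K) :
    specNorm (Fvk r v k (Pi.single i 1)) =
      (1 / Real.sqrt ((Nx : ℝ) * Ny)) * specNorm ((RkMat r k).map Complex.ofReal) := by
  have unimodular : ∀ n : ℕ, ‖dftRoot T Nx Ny i ^ n‖ = 1 := fun n => by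
    rw [norm_pow, norm_dftRoot, one_pow]
  rw [Fvk_single_eq hT, specNorm_eq_l2_opNorm, specNorm_eq_l2_opNorm, norm_smul,
    l2_opNorm_mul_diagonal (fun _ => unimodular _), l2_opNorm_diagonal_mul (fun _ => unimodular _),
    norm_mul, unimodular, mul_one, Complex.norm_real, Real.norm_of_nonneg (by positivity)]

/-- For every canonical basis vector `e_i` of `ℂ^N`, every `v` and
every `k`, `‖Ḟ_v^k(e_i)‖₂ = (Nx·Ny)^{−1/2}·‖R^k‖₂`. -/
theorem specNorm_Fvk_single (T Nx Ny K : ℕ) (hT : 0 < T) (hNx : 0 < Nx)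
    (hNy : 0 < Ny) (hK : 0 < K)
    (r : Fin Nx → Fin K → Fin T → ℝ)
    (hr : ∀ u k t, r u k t = 1 ∨ r u k t = -1)
    (i : Fin T × Fin Nx × Fin Ny) (v : Fin Ny) (k : Fin K) :
    specNorm (Fvk r v k (Pi.single i 1)) =
      (1 / Real.sqrt ((Nx : ℝ) * Ny)) * specNorm ((RkMat r k).map Complex.ofReal) :=
  specNorm_Fvk_single_general T Nx Ny K hT r i v k

end HFVcr
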